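/- Let 0 ≤ δ < 1, 0 < C < 3/4 and 0 < B < 1/(√(C/3 − C²/3) + C), and for each n (sufficiently large) let Z^{(n)} = (z^{(n)}_{ij}) be a typical table for the margins of M_{n,δ}(B,C). Then as n → ∞, z^{(n)}_{11} = B²(1−C)/(B² − 2B + 1/C) + O(n^{δ−1}) and z^{(n)}_{1, ⌊n^δ⌋+1} = z^{(n)}_{⌊n^δ⌋+1, 1} = BC + O(n^{δ−1}). -/

import Mathlib

open Finset Filter
open Real

/-- The binary transportation polytope: `m × n` real matrices with entries in `[0,1]`,
row sums `r` and column sums `c`. -/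
def P01 {m n : ℕ} (r : Fin m → ℕ) (c : Fin n → ℕ) : Set (Fin m → Fin n → ℝ) :=
  {Z | (∀ i j, 0 ≤ Z i j ∧ Z i j ≤ 1) ∧ (∀ i, ∑ j, Z i j = (r i : ℝ)) ∧
    (∀ j, ∑ i, Z i j = (c j : ℝ))}

/-- The Bernoulli entropy functional
`g(Z) = ∑_{i,j} z_{ij} ln(1/z_{ij}) + (1 - z_{ij}) ln(1/(1 - z_{ij}))`. -/
noncomputable def entG {m n : ℕ} (Z : Fin m → Fin n → ℝ) : ℝ :=
  ∑ i, ∑ j, (Z i j * Real.log (1 / Z i j) + (1 - Z i j) * Real.log (1 / (1 - Z i j)))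

/-- `Z` is a typical table for the margins `(r, c)`: it has all entries in `(0,1)`,
lies in the binary transportation polytope, and maximizes `g` among all matrices in the
polytope with entries in `(0,1)`. -/
def IsTypicalTable {m n : ℕ} (r : Fin m → ℕ) (c : Fin n → ℕ)
    (Z : Fin m → Fin n → ℝ) : Prop :=
  (∀ i j, 0 < Z i j ∧ Z i j < 1) ∧ Z ∈ P01 r c ∧
    ∀ W ∈ P01 r c, (∀ i j, 0 < W i j ∧ W i j < 1) → entG W ≤ entG Z

/-- The margins of `BCT n δ B C`: the first `⌊n^δ⌋` entries equal `⌊BCn⌋` and the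
remaining `n` entries equal `⌊Cn⌋`. -/
noncomputable def marg (n : ℕ) (δ B C : ℝ) : Fin (⌊(n : ℝ) ^ δ⌋₊ + n) → ℕ :=
  fun i => if i.1 < ⌊(n : ℝ) ^ δ⌋₊ then ⌊B * C * (n : ℝ)⌋₊ else ⌊C * (n : ℝ)⌋₊

/-- Entry of a square real matrix at 0-based natural indices, with junk value `0`
out of range. -/
def entR {N : ℕ} (Z : Fin N → Fin N → ℝ) (a b : ℕ) : ℝ :=
  if h : a < N ∧ b < N then Z ⟨a, h.1⟩ ⟨b, h.2⟩ else 0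

lemma entG_eq {m n : ℕ} (Z : Fin m → Fin n → ℝ) :
    entG Z = ∑ i, ∑ j, Real.binEntropy (Z i j) := by
  simp [entG, Real.binEntropy, one_div]

lemma midpoint_le {x y : ℝ} (hx : x ∈ Set.Icc (0:ℝ) 1) (hy : y ∈ Set.Icc (0:ℝ) 1) :
    (Real.binEntropy x + Real.binEntropy y) / 2 ≤ Real.binEntropy ((x + y) / 2) := by
  have h := Real.strictConcave_binEntropy.concaveOn.2 hx hy
    (by norm_num : (0:ℝ) ≤ 1/2) (by norm_num : (0:ℝ) ≤ 1/2) (by norm_num)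
  simp only [smul_eq_mul] at h
  have e : (1:ℝ)/2 * x + 1/2 * y = (x+y)/2 := by ring
  rw [e] at h; linarith

lemma midpoint_lt {x y : ℝ} (hx : x ∈ Set.Icc (0:ℝ) 1) (hy : y ∈ Set.Icc (0:ℝ) 1)
    (hxy : x ≠ y) :
    (Real.binEntropy x + Real.binEntropy y) / 2 < Real.binEntropy ((x + y) / 2) := by
  have h := Real.strictConcave_binEntropy.2 hx hy hxy
    (by norm_num : (0:ℝ) < 1/2) (by norm_num : (0:ℝ) < 1/2) (by norm_num)
  simp only [smul_eq_mul] at h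
  have e : (1:ℝ)/2 * x + 1/2 * y = (x+y)/2 := by ring
  rw [e] at h; linarith

lemma typical_unique {m n : ℕ} {r : Fin m → ℕ} {c : Fin n → ℕ}
    {Z W : Fin m → Fin n → ℝ} (hZ : IsTypicalTable r c Z) (hW : IsTypicalTable r c W) :
    Z = W := by
  by_contra hne
  obtain ⟨Zpos, ⟨Z01, Zr, Zc⟩, Zmax⟩ := hZ
  obtain ⟨Wpos, ⟨W01, Wr, Wc⟩, Wmax⟩ := hW
  -- find a differing entry
  have : ∃ i j, Z i j ≠ W i j := by
    by_contra h
    push_neg at h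
    exact hne (funext fun i => funext fun j => h i j)
  obtain ⟨i₀, j₀, hij⟩ := this
  set M : Fin m → Fin n → ℝ := fun i j => (Z i j + W i j) / 2 with hM
  have Mpos : ∀ i j, 0 < M i j ∧ M i j < 1 := fun i j => by
    constructor
    · have := (Zpos i j).1; have := (Wpos i j).1; simp only [hM]; linarith
    · have := (Zpos i j).2; have := (Wpos i j).2; simp only [hM]; linarith
  have MP : M ∈ P01 r c := by
    refine ⟨fun i j => ⟨(Mpos i j).1.le, (Mpos i j).2.le⟩, fun i => ?_, fun j => ?_⟩
    · simp only [hM]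
      rw [← Finset.sum_div, Finset.sum_add_distrib, Zr, Wr]; ring
    · simp only [hM]
      rw [← Finset.sum_div, Finset.sum_add_distrib, Zc, Wc]; ring
  have hEW : entG W = entG Z :=
    le_antisymm (Zmax W ⟨W01, Wr, Wc⟩ Wpos) (Wmax Z ⟨Z01, Zr, Zc⟩ Zpos)
  have hlt : entG Z < entG M := by
    rw [entG_eq Z, entG_eq M]
    have hrow : ∀ i : Fin m,
        ∑ j, (Real.binEntropy (Z i j) + Real.binEntropy (W i j)) / 2
          ≤ ∑ j, Real.binEntropy (M i j) := by
      intro i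
      refine Finset.sum_le_sum fun j _ => ?_
      exact midpoint_le ⟨(Z01 i j).1, (Z01 i j).2⟩ ⟨(W01 i j).1, (W01 i j).2⟩
    have hstrict : ∑ j, (Real.binEntropy (Z i₀ j) + Real.binEntropy (W i₀ j)) / 2
        < ∑ j, Real.binEntropy (M i₀ j) := by
      refine Finset.sum_lt_sum (fun j _ => midpoint_le ⟨(Z01 i₀ j).1, (Z01 i₀ j).2⟩
        ⟨(W01 i₀ j).1, (W01 i₀ j).2⟩) ⟨j₀, Finset.mem_univ _, ?_⟩
      exact midpoint_lt ⟨(Z01 i₀ j₀).1, (Z01 i₀ j₀).2⟩ ⟨(W01 i₀ j₀).1, (W01 i₀ j₀).2⟩ hij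
    calc ∑ i, ∑ j, Real.binEntropy (Z i j)
        = ∑ i, ∑ j, (Real.binEntropy (Z i j) + Real.binEntropy (W i j)) / 2 := by
          rw [show (∑ i, ∑ j, Real.binEntropy (Z i j)) =
            ((∑ i, ∑ j, Real.binEntropy (Z i j)) + (∑ i, ∑ j, Real.binEntropy (W i j))) / 2 by
              rw [show (∑ i, ∑ j, Real.binEntropy (W i j)) = ∑ i, ∑ j, Real.binEntropy (Z i j) by
                rw [← entG_eq, ← entG_eq, hEW]]
              ring]
          rw [← Finset.sum_add_distrib, Finset.sum_div]
          exact Finset.sum_congr rfl fun i _ => by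
            rw [← Finset.sum_add_distrib, Finset.sum_div]
      _ < ∑ i, ∑ j, Real.binEntropy (M i j) :=
          Finset.sum_lt_sum (fun i _ => hrow i) ⟨i₀, Finset.mem_univ _, hstrict⟩
  exact absurd (Zmax M MP Mpos) (not_le.2 hlt)

lemma typical_transpose {N : ℕ} {r : Fin N → ℕ} {Z : Fin N → Fin N → ℝ}
    (h : IsTypicalTable r r Z) : IsTypicalTable r r (fun i j => Z j i) := by
  obtain ⟨Zpos, ⟨Z01, Zr, Zc⟩, Zmax⟩ := h
  have hE : entG (fun i j => Z j i) = entG Z := by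
    rw [entG_eq, entG_eq]; exact Finset.sum_comm
  exact ⟨fun i j => Zpos j i, ⟨fun i j => Z01 j i, fun i => Zc i, fun j => Zr j⟩,
    fun W hW hWpos => (Zmax W hW hWpos).trans_eq hE.symm⟩

lemma typical_rowswap {m n : ℕ} {r : Fin m → ℕ} {c : Fin n → ℕ} {Z : Fin m → Fin n → ℝ}
    (h : IsTypicalTable r c Z) (p q : Fin m) (hr : r p = r q) :
    IsTypicalTable r c (fun i j => Z (Equiv.swap p q i) j) := by
  obtain ⟨Zpos, ⟨Z01, Zr, Zc⟩, Zmax⟩ := h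
  have hrs : ∀ i, r (Equiv.swap p q i) = r i := by
    intro i
    rcases eq_or_ne i p with rfl | hip
    · rw [Equiv.swap_apply_left, hr]
    rcases eq_or_ne i q with rfl | hiq
    · rw [Equiv.swap_apply_right, hr]
    · rw [Equiv.swap_apply_of_ne_of_ne hip hiq]
  have hE : entG (fun i j => Z (Equiv.swap p q i) j) = entG Z := by
    rw [entG_eq, entG_eq]
    exact Equiv.sum_comp (Equiv.swap p q) (fun i => ∑ j, Real.binEntropy (Z i j))
  refine ⟨fun i j => Zpos _ j, ⟨fun i j => Z01 _ j, fun i => by rw [Zr, hrs], fun j => ?_⟩,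
    fun W hW hWpos => (Zmax W hW hWpos).trans_eq hE.symm⟩
  rw [← Zc j]
  exact Equiv.sum_comp (Equiv.swap p q) (fun i => Z i j)

lemma typical_colswap {m n : ℕ} {r : Fin m → ℕ} {c : Fin n → ℕ} {Z : Fin m → Fin n → ℝ}
    (h : IsTypicalTable r c Z) (p q : Fin n) (hc : c p = c q) :
    IsTypicalTable r c (fun i j => Z i (Equiv.swap p q j)) := by
  obtain ⟨Zpos, ⟨Z01, Zr, Zc⟩, Zmax⟩ := h
  have hcs : ∀ j, c (Equiv.swap p q j) = c j := by
    intro j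
    rcases eq_or_ne j p with rfl | hip
    · rw [Equiv.swap_apply_left, hc]
    rcases eq_or_ne j q with rfl | hiq
    · rw [Equiv.swap_apply_right, hc]
    · rw [Equiv.swap_apply_of_ne_of_ne hip hiq]
  have hE : entG (fun i j => Z i (Equiv.swap p q j)) = entG Z := by
    rw [entG_eq, entG_eq]
    exact Finset.sum_congr rfl fun i _ =>
      Equiv.sum_comp (Equiv.swap p q) (fun j => Real.binEntropy (Z i j))
  refine ⟨fun i j => Zpos i _, ⟨fun i j => Z01 i _, fun i => ?_, fun j => by rw [Zc, hcs]⟩,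
    fun W hW hWpos => (Zmax W hW hWpos).trans_eq hE.symm⟩
  rw [← Zr i]
  exact Equiv.sum_comp (Equiv.swap p q) (fun j => Z i j)

lemma typical_symm {N : ℕ} {r : Fin N → ℕ} {Z : Fin N → Fin N → ℝ}
    (h : IsTypicalTable r r Z) : ∀ i j, Z i j = Z j i := by
  intro i j
  have := typical_unique (typical_transpose h) h
  exact (congrFun (congrFun this i) j).symm

lemma typical_row_eq {m n : ℕ} {r : Fin m → ℕ} {c : Fin n → ℕ} {Z : Fin m → Fin n → ℝ}
    (h : IsTypicalTable r c Z) (p q : Fin m) (hr : r p = r q) :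
    ∀ j, Z p j = Z q j := by
  intro j
  have := typical_unique (typical_rowswap h p q hr) h
  have h2 := congrFun (congrFun this p) j
  simpa [Equiv.swap_apply_left] using h2.symm

lemma typical_col_eq {m n : ℕ} {r : Fin m → ℕ} {c : Fin n → ℕ} {Z : Fin m → Fin n → ℝ}
    (h : IsTypicalTable r c Z) (p q : Fin n) (hc : c p = c q) :
    ∀ i, Z i p = Z i q := by
  intro i
  have := typical_unique (typical_colswap h p q hc) h
  have h2 := congrFun (congrFun this i) p
  simpa [Equiv.swap_apply_left] using h2.symm

noncomputable def uu (x : ℝ) : ℝ := Real.log (1 - x) - Real.log x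

lemma hasDerivAt_uu {x : ℝ} (hx0 : 0 < x) (hx1 : x < 1) :
    HasDerivAt uu (-(1 / (x * (1 - x)))) x := by
  have hx : x ≠ 0 := ne_of_gt hx0
  have h1x : (1:ℝ) - x ≠ 0 := by linarith
  have h1 : HasDerivAt (fun y : ℝ => 1 - y) (-1) x := by
    exact (hasDerivAt_id' x).const_sub 1
  have h2 : HasDerivAt (fun y : ℝ => Real.log (1 - y)) ((1-x)⁻¹ * (-1)) x :=
    (Real.hasDerivAt_log h1x).comp x h1
  have h3 : HasDerivAt uu ((1-x)⁻¹ * (-1) - x⁻¹) x :=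
    h2.sub (Real.hasDerivAt_log hx)
  convert h3 using 1
  field_simp
  ring

lemma uu_slope {x y : ℝ} (hxy : x < y) (hx : x ∈ Set.Ioo (0:ℝ) 1) (hy : y ∈ Set.Ioo (0:ℝ) 1) :
    ∃ c ∈ Set.Ioo x y, uu y - uu x = -(1 / (c * (1 - c))) * (y - x) := by
  have hsub : Set.Icc x y ⊆ Set.Ioo (0:ℝ) 1 := fun t ht =>
    ⟨lt_of_lt_of_le hx.1 ht.1, lt_of_le_of_lt ht.2 hy.2⟩
  have hcont : ContinuousOn uu (Set.Icc x y) := fun t ht =>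
    (hasDerivAt_uu (hsub ht).1 (hsub ht).2).continuousAt.continuousWithinAt
  obtain ⟨c, hc, hceq⟩ := exists_hasDerivAt_eq_slope uu (fun t => -(1 / (t * (1 - t)))) hxy
    hcont (fun t ht => hasDerivAt_uu (hsub ⟨ht.1.le, ht.2.le⟩).1 (hsub ⟨ht.1.le, ht.2.le⟩).2)
  refine ⟨c, hc, ?_⟩
  rw [hceq, div_mul_cancel₀]
  exact ne_of_gt (sub_pos.2 hxy)

lemma uu_expand_lt {x y : ℝ} (h : x < y) (hx : x ∈ Set.Ioo (0:ℝ) 1)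
    (hy : y ∈ Set.Ioo (0:ℝ) 1) : 4 * (y - x) ≤ uu x - uu y := by
  obtain ⟨c, hc, hceq⟩ := uu_slope h hx hy
  have hc0 : 0 < c := lt_trans hx.1 hc.1
  have hc1 : c < 1 := lt_trans hc.2 hy.2
  have hq : 0 < c * (1 - c) := mul_pos hc0 (by linarith)
  have hq4 : c * (1 - c) ≤ 1 / 4 := by nlinarith [sq_nonneg (2*c - 1)]
  have hg : 4 ≤ 1 / (c * (1 - c)) := by
    rw [le_div_iff₀ hq]; linarith
  have habs : uu x - uu y = (1 / (c * (1 - c))) * (y - x) := by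
    rw [show uu x - uu y = -(uu y - uu x) by ring, hceq]; ring
  rw [habs]
  have : 0 < y - x := sub_pos.2 h
  nlinarith

lemma uu_expand {x y : ℝ} (hx : x ∈ Set.Ioo (0:ℝ) 1) (hy : y ∈ Set.Ioo (0:ℝ) 1) :
    4 * |x - y| ≤ |uu x - uu y| := by
  rcases lt_trichotomy x y with h | h | h
  · have h2 := uu_expand_lt h hx hy
    rw [abs_of_neg (sub_neg.2 h), abs_of_pos (by linarith)]
    linarith
  · simp [h]
  · have h2 := uu_expand_lt h hy hx
    rw [abs_of_pos (sub_pos.2 h), abs_sub_comm, abs_of_pos (by linarith)]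
    linarith

lemma uu_lip_lt {x y m M : ℝ} (h : x < y) (hm : 0 < m) (hM : M < 1)
    (hx : x ∈ Set.Icc m M) (hy : y ∈ Set.Icc m M) :
    uu x - uu y ≤ (1 / (m * (1 - M))) * (y - x) := by
  have hmM : 0 < m * (1 - M) := mul_pos hm (by linarith)
  obtain ⟨c, hc, hceq⟩ := uu_slope h ⟨lt_of_lt_of_le hm hx.1, lt_of_le_of_lt hx.2 hM⟩
    ⟨lt_of_lt_of_le hm hy.1, lt_of_le_of_lt hy.2 hM⟩
  have hcm : m ≤ c := le_trans hx.1 hc.1.le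
  have hcM : c ≤ M := le_trans hc.2.le hy.2
  have hq : 0 < c * (1 - c) := mul_pos (lt_of_lt_of_le hm hcm) (by linarith)
  have hg : 1 / (c * (1 - c)) ≤ 1 / (m * (1 - M)) := by
    apply one_div_le_one_div_of_le hmM
    nlinarith
  have habs : uu x - uu y = (1 / (c * (1 - c))) * (y - x) := by
    rw [show uu x - uu y = -(uu y - uu x) by ring, hceq]; ring
  rw [habs]
  have : 0 < y - x := sub_pos.2 h
  nlinarith

lemma uu_lip {x y m M : ℝ} (hm : 0 < m) (hM : M < 1)
    (hx : x ∈ Set.Icc m M) (hy : y ∈ Set.Icc m M) :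
    |uu x - uu y| ≤ (1 / (m * (1 - M))) * |x - y| := by
  have hmM : 0 < m * (1 - M) := mul_pos hm (by linarith)
  rcases lt_trichotomy x y with h | h | h
  · have h2 := uu_lip_lt h hm hM hx hy
    have h3 : 0 ≤ uu x - uu y := by
      have hxx : x ∈ Set.Ioo (0:ℝ) 1 := ⟨lt_of_lt_of_le hm hx.1, lt_of_le_of_lt hx.2 hM⟩
      have hyy : y ∈ Set.Ioo (0:ℝ) 1 := ⟨lt_of_lt_of_le hm hy.1, lt_of_le_of_lt hy.2 hM⟩
      have := uu_expand_lt h hxx hyy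
      linarith
    rw [abs_of_nonneg h3, abs_of_neg (sub_neg.2 h)]
    linarith
  · simp [h]
  · have h2 := uu_lip_lt h hm hM hy hx
    have h3 : 0 ≤ uu y - uu x := by
      have hxx : x ∈ Set.Ioo (0:ℝ) 1 := ⟨lt_of_lt_of_le hm hx.1, lt_of_le_of_lt hx.2 hM⟩
      have hyy : y ∈ Set.Ioo (0:ℝ) 1 := ⟨lt_of_lt_of_le hm hy.1, lt_of_le_of_lt hy.2 hM⟩
      have := uu_expand_lt h hyy hxx
      linarith
    rw [abs_sub_comm, abs_of_nonneg h3, abs_of_pos (sub_pos.2 h)]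
    linarith

lemma key_est {m M a b c p q a' : ℝ} (hm : 0 < m) (hM : M < 1)
    (ha : a ∈ Set.Ioo (0:ℝ) 1) (ha' : a' ∈ Set.Ioo (0:ℝ) 1)
    (hb : b ∈ Set.Icc m M) (hc : c ∈ Set.Icc m M)
    (hp : p ∈ Set.Icc m M) (hq : q ∈ Set.Icc m M)
    (hstat : uu a + uu c = 2 * uu b) (hstat' : uu a' + uu q = 2 * uu p) :
    |a - a'| ≤ (1 / (m * (1 - M))) * (2 * |b - p| + |c - q|) / 4 := by
  have h1 : 4 * |a - a'| ≤ |uu a - uu a'| := uu_expand ha ha'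
  have h2 : uu a - uu a' = 2 * (uu b - uu p) - (uu c - uu q) := by linarith
  have h3 : |uu a - uu a'| ≤ 2 * |uu b - uu p| + |uu c - uu q| := by
    rw [h2]
    calc |2 * (uu b - uu p) - (uu c - uu q)| ≤ |2 * (uu b - uu p)| + |uu c - uu q| :=
          abs_sub _ _
      _ = 2 * |uu b - uu p| + |uu c - uu q| := by rw [abs_mul]; norm_num
  have h4 : |uu b - uu p| ≤ (1 / (m * (1 - M))) * |b - p| := uu_lip hm hM hb hp
  have h5 : |uu c - uu q| ≤ (1 / (m * (1 - M))) * |c - q| := uu_lip hm hM hc hq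
  linarith

lemma block_sum {k n : ℕ} (f : Fin (k + n) → ℝ) (x y : ℝ)
    (hx : ∀ j : Fin (k + n), j.1 < k → f j = x)
    (hy : ∀ j : Fin (k + n), ¬ j.1 < k → f j = y) :
    ∑ j, f j = k * x + n * y := by
  rw [Fin.sum_univ_add]
  have h1 : ∀ i : Fin k, f (Fin.castAdd n i) = x := fun i => hx _ (by simp [i.2])
  have h2 : ∀ i : Fin n, f (Fin.natAdd k i) = y := fun i => hy _ (by simp)
  rw [Finset.sum_congr rfl (fun i _ => h1 i), Finset.sum_congr rfl (fun i _ => h2 i)]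
  simp [mul_comm]

lemma hasDerivAt_H_affine (p coef : ℝ) (hp0 : 0 < p) (hp1 : p < 1) :
    HasDerivAt (fun t : ℝ => Real.binEntropy (p + t * coef)) (coef * uu p) 0 := by
  have hin : HasDerivAt (fun t : ℝ => p + t * coef) coef 0 := by
    simpa using ((hasDerivAt_id (0:ℝ)).mul_const coef).const_add p
  have h0 : p + (0:ℝ) * coef = p := by ring
  have hb : HasDerivAt Real.binEntropy (uu p) (p + (0:ℝ) * coef) := by
    rw [h0]
    exact Real.hasDerivAt_binEntropy (ne_of_gt hp0) (ne_of_lt hp1)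
  have := hb.comp 0 hin
  have e : coef * uu p = uu p * coef := mul_comm _ _
  rw [e]; exact this

lemma stationarity {k n : ℕ} (hk : 0 < k) (hn : 0 < n) (hkn : k ≤ n)
    {r : Fin (k + n) → ℕ} {Z : Fin (k + n) → Fin (k + n) → ℝ}
    (hT : IsTypicalTable r r Z) (a b c : ℝ)
    (hblock : ∀ i j : Fin (k + n), Z i j =
      if i.1 < k then (if j.1 < k then a else b) else (if j.1 < k then b else c)) :
    uu a + uu c = 2 * uu b := by
  obtain ⟨Zpos, ⟨Z01, Zr, Zc⟩, Zmax⟩ := hT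
  have hkN : k < k + n := Nat.lt_add_of_pos_right hn
  have h0N : 0 < k + n := Nat.lt_of_lt_of_le hk (Nat.le_add_right k n)
  set i0 : Fin (k + n) := ⟨0, h0N⟩
  set ik : Fin (k + n) := ⟨k, hkN⟩
  have hi0 : i0.1 < k := hk
  have hik : ¬ ik.1 < k := lt_irrefl k
  have ha : 0 < a ∧ a < 1 := by have := Zpos i0 i0; rwa [hblock, if_pos hi0, if_pos hi0] at this
  have hb : 0 < b ∧ b < 1 := by have := Zpos i0 ik; rwa [hblock, if_pos hi0, if_neg hik] at this
  have hc : 0 < c ∧ c < 1 := by have := Zpos ik ik; rwa [hblock, if_neg hik, if_neg hik] at this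
  have hν : (0:ℝ) < n := by exact_mod_cast hn
  have hκ : (0:ℝ) < k := by exact_mod_cast hk
  have hκν : (k:ℝ) / n ≤ 1 := by
    rw [div_le_one hν]; exact_mod_cast hkn
  have hκν2 : (k:ℝ)^2 / (n:ℝ)^2 ≤ 1 := by
    rw [div_le_one (by positivity)]
    have : (k:ℝ) ≤ n := by exact_mod_cast hkn
    nlinarith
  set D : Fin (k + n) → Fin (k + n) → ℝ := fun i j =>
    if i.1 < k then (if j.1 < k then (1:ℝ) else -((k:ℝ)/n))
    else (if j.1 < k then -((k:ℝ)/n) else (k:ℝ)^2/(n:ℝ)^2) with hD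
  have hDbound : ∀ i j, |D i j| ≤ 1 := by
    intro i j
    have h1 : |(1:ℝ)| ≤ 1 := by norm_num
    have h2 : |(-((k:ℝ)/n))| ≤ 1 := by
      rw [abs_neg, abs_of_nonneg (by positivity)]; exact hκν
    have h3 : |(k:ℝ)^2/(n:ℝ)^2| ≤ 1 := by
      rw [abs_of_nonneg (by positivity)]; exact hκν2
    simp only [hD]
    split <;> split <;> assumption
  have hDrow : ∀ i : Fin (k + n), ∑ j, D i j = 0 := by
    intro i
    by_cases hi : i.1 < k
    · rw [block_sum (D i) 1 (-((k:ℝ)/n)) (fun j hj => by simp [hD, hi, hj])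
        (fun j hj => by simp [hD, hi, hj])]
      field_simp
      ring
    · rw [block_sum (D i) (-((k:ℝ)/n)) ((k:ℝ)^2/(n:ℝ)^2) (fun j hj => by simp [hD, hi, hj])
        (fun j hj => by simp [hD, hi, hj])]
      field_simp
      ring
  have hDcol : ∀ j : Fin (k + n), ∑ i, D i j = 0 := by
    intro j
    by_cases hj : j.1 < k
    · rw [block_sum (fun i => D i j) 1 (-((k:ℝ)/n)) (fun i hi => by simp [hD, hi, hj])
        (fun i hi => by simp [hD, hi, hj])]
      field_simp
      ring
    · rw [block_sum (fun i => D i j) (-((k:ℝ)/n)) ((k:ℝ)^2/(n:ℝ)^2)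
        (fun i hi => by simp [hD, hi, hj]) (fun i hi => by simp [hD, hi, hj])]
      field_simp
      ring
  set ε : ℝ := min (min a (1-a)) (min (min b (1-b)) (min c (1-c))) / 2 with hε
  have t1 := min_le_left (min a (1-a)) (min (min b (1-b)) (min c (1-c)))
  have t2 := min_le_right (min a (1-a)) (min (min b (1-b)) (min c (1-c)))
  have t3 := min_le_left (min b (1-b)) (min c (1-c))
  have t4 := min_le_right (min b (1-b)) (min c (1-c))
  have m1 := min_le_left a (1-a)
  have m2 := min_le_right a (1-a)
  have m3 := min_le_left b (1-b)
  have m4 := min_le_right b (1-b)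
  have m5 := min_le_left c (1-c)
  have m6 := min_le_right c (1-c)
  have hεpos : 0 < ε := by
    have hmin : 0 < min (min a (1-a)) (min (min b (1-b)) (min c (1-c))) :=
      lt_min (lt_min ha.1 (by linarith [ha.2])) (lt_min (lt_min hb.1 (by linarith [hb.2]))
        (lt_min hc.1 (by linarith [hc.2])))
    simp only [hε]; linarith
  -- entries of the perturbed matrix are in (0,1)
  have hentry : ∀ t : ℝ, |t| ≤ ε → ∀ i j, 0 < Z i j + t * D i j ∧ Z i j + t * D i j < 1 := by
    intro t ht i j
    have htD : |t * D i j| ≤ ε := by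
      rw [abs_mul]
      calc |t| * |D i j| ≤ ε * 1 := mul_le_mul ht (hDbound i j) (abs_nonneg _) hεpos.le
        _ = ε := mul_one ε
    have h1 : -ε ≤ t * D i j := neg_le_of_abs_le htD
    have h2 : t * D i j ≤ ε := le_of_abs_le htD
    rw [hblock]
    by_cases hi : i.1 < k <;> by_cases hj : j.1 < k <;>
      simp only [hD, hi, hj, if_true, if_false] at h1 h2 ⊢ <;>
      constructor <;> linarith
  -- the perturbed matrices lie in the polytope
  have hP : ∀ t : ℝ, |t| ≤ ε → (fun i j => Z i j + t * D i j) ∈ P01 r r := by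
    intro t ht
    refine ⟨fun i j => ⟨(hentry t ht i j).1.le, (hentry t ht i j).2.le⟩,
      fun i => ?_, fun j => ?_⟩
    · rw [Finset.sum_add_distrib, Zr, ← Finset.mul_sum, hDrow, mul_zero, add_zero]
    · rw [Finset.sum_add_distrib, Zc, ← Finset.mul_sum, hDcol, mul_zero, add_zero]
  set ψ : ℝ → ℝ := fun t => (k:ℝ)^2 * Real.binEntropy (a + t * 1)
    + 2*(k:ℝ)*(n:ℝ) * Real.binEntropy (b + t * (-((k:ℝ)/n)))
    + (n:ℝ)^2 * Real.binEntropy (c + t * ((k:ℝ)^2/(n:ℝ)^2)) with hψ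
  have hψval : ∀ t : ℝ, entG (fun i j => Z i j + t * D i j) = ψ t := by
    intro t
    rw [entG_eq]
    have hrow1 : ∀ i : Fin (k+n), i.1 < k →
        ∑ j, Real.binEntropy (Z i j + t * D i j)
          = (k:ℝ) * Real.binEntropy (a + t * 1)
            + (n:ℝ) * Real.binEntropy (b + t * (-((k:ℝ)/n))) := by
      intro i hi
      exact block_sum _ _ _ (fun j hj => by simp [hblock, hD, hi, hj])
        (fun j hj => by simp [hblock, hD, hi, hj])
    have hrow2 : ∀ i : Fin (k+n), ¬ i.1 < k →
        ∑ j, Real.binEntropy (Z i j + t * D i j)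
          = (k:ℝ) * Real.binEntropy (b + t * (-((k:ℝ)/n)))
            + (n:ℝ) * Real.binEntropy (c + t * ((k:ℝ)^2/(n:ℝ)^2)) := by
      intro i hi
      exact block_sum _ _ _ (fun j hj => by simp [hblock, hD, hi, hj])
        (fun j hj => by simp [hblock, hD, hi, hj])
    rw [block_sum _ _ _ hrow1 hrow2]
    simp only [hψ]
    ring
  have hfun0 : (fun i j => Z i j + (0:ℝ) * D i j) = Z := by
    funext i j; ring
  have h0 : ψ 0 = entG Z := by rw [← hψval 0, hfun0]
  have hψmax : IsLocalMax ψ 0 := by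
    have : ∀ᶠ t in nhds (0:ℝ), ψ t ≤ ψ 0 := by
      filter_upwards [Metric.ball_mem_nhds (0:ℝ) hεpos] with t ht
      have ht' : |t| ≤ ε := by
        rw [Metric.mem_ball, Real.dist_eq, sub_zero] at ht; exact ht.le
      rw [h0, ← hψval t]
      exact Zmax _ (hP t ht') (hentry t ht')
    exact this
  have hd1 : HasDerivAt (fun t : ℝ => Real.binEntropy (a + t * 1)) (1 * uu a) 0 :=
    hasDerivAt_H_affine a 1 ha.1 ha.2
  have hd2 : HasDerivAt (fun t : ℝ => Real.binEntropy (b + t * (-((k:ℝ)/n))))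
      ((-((k:ℝ)/n)) * uu b) 0 := hasDerivAt_H_affine b _ hb.1 hb.2
  have hd3 : HasDerivAt (fun t : ℝ => Real.binEntropy (c + t * ((k:ℝ)^2/(n:ℝ)^2)))
      (((k:ℝ)^2/(n:ℝ)^2) * uu c) 0 := hasDerivAt_H_affine c _ hc.1 hc.2
  have hdψ : HasDerivAt ψ ((k:ℝ)^2 * (1 * uu a) + 2*(k:ℝ)*(n:ℝ) * ((-((k:ℝ)/n)) * uu b)
      + (n:ℝ)^2 * (((k:ℝ)^2/(n:ℝ)^2) * uu c)) 0 :=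
    ((hd1.const_mul _).add (hd2.const_mul _)).add (hd3.const_mul _)
  have hdψ' : HasDerivAt ψ ((k:ℝ)^2 * (uu a + uu c - 2 * uu b)) 0 := by
    convert hdψ using 1
    field_simp
    ring
  have hzero : (k:ℝ)^2 * (uu a + uu c - 2 * uu b) = 0 := by
    rw [← hdψ'.deriv]
    exact hψmax.deriv_eq_zero
  have hk2 : ((k:ℝ)^2) ≠ 0 := by positivity
  rcases mul_eq_zero.mp hzero with h | h
  · exact absurd h hk2
  · linarith

lemma target_props {B C : ℝ} (hB : 0 < B) (hC0 : 0 < C) (hC1 : C < 1) (hBC : B * C < 1) :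
    (B^2*(1-C)/(B^2-2*B+1/C)) ∈ Set.Ioo (0:ℝ) 1 ∧
    uu (B^2*(1-C)/(B^2-2*B+1/C)) + uu C = 2 * uu (B*C) := by
  have h1C : 0 < 1 - C := by linarith
  have h1BC : 0 < 1 - B*C := by linarith
  have hDd : 0 < B^2*C - 2*B*C + 1 := by
    nlinarith [sq_nonneg (1 - B*C), mul_pos (mul_pos (mul_pos hB hB) hC0) h1C]
  have hd : B^2 - 2*B + 1/C = (B^2*C - 2*B*C + 1)/C := by field_simp
  have hdpos : 0 < B^2 - 2*B + 1/C := by rw [hd]; positivity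
  have E1 : B^2*(1-C)/(B^2-2*B+1/C) = B^2*C*(1-C)/(B^2*C - 2*B*C + 1) := by
    rw [div_eq_div_iff (ne_of_gt hdpos) (ne_of_gt hDd)]
    field_simp
  have hnum : 0 < B^2*C*(1-C) := by positivity
  have hlt : B^2*C*(1-C) < B^2*C - 2*B*C + 1 := by nlinarith [sq_nonneg (1 - B*C)]
  have hmem : (B^2*(1-C)/(B^2-2*B+1/C)) ∈ Set.Ioo (0:ℝ) 1 := by
    rw [E1]
    exact ⟨by positivity, (div_lt_one hDd).2 hlt⟩
  refine ⟨hmem, ?_⟩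
  have h1a : 1 - B^2*C*(1-C)/(B^2*C - 2*B*C + 1) = (1-B*C)^2/(B^2*C - 2*B*C + 1) := by
    rw [eq_div_iff hDd.ne', sub_mul, div_mul_cancel₀ _ hDd.ne']; ring
  rw [E1]
  unfold uu
  rw [h1a, Real.log_div (pow_ne_zero 2 h1BC.ne') hDd.ne',
    Real.log_div hnum.ne' hDd.ne', Real.log_pow,
    Real.log_mul (by positivity : (B^2*C : ℝ) ≠ 0) h1C.ne',
    Real.log_mul (by positivity : (B^2 : ℝ) ≠ 0) hC0.ne',
    Real.log_mul hB.ne' hC0.ne', Real.log_pow]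
  push_cast
  ring

lemma marg_congr {n : ℕ} {δ B C : ℝ} (i i' : Fin (⌊(n:ℝ)^δ⌋₊ + n))
    (h : i.1 < ⌊(n:ℝ)^δ⌋₊ ↔ i'.1 < ⌊(n:ℝ)^δ⌋₊) : marg n δ B C i = marg n δ B C i' := by
  unfold marg
  exact if_congr h rfl rfl

lemma block_const {n : ℕ} {δ B C : ℝ}
    {Z : Fin (⌊(n:ℝ)^δ⌋₊ + n) → Fin (⌊(n:ℝ)^δ⌋₊ + n) → ℝ}
    (hT : IsTypicalTable (marg n δ B C) (marg n δ B C) Z)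
    (i j i' j' : Fin (⌊(n:ℝ)^δ⌋₊ + n))
    (hi : i.1 < ⌊(n:ℝ)^δ⌋₊ ↔ i'.1 < ⌊(n:ℝ)^δ⌋₊)
    (hj : j.1 < ⌊(n:ℝ)^δ⌋₊ ↔ j'.1 < ⌊(n:ℝ)^δ⌋₊) :
    Z i j = Z i' j' := by
  rw [typical_row_eq hT i i' (marg_congr i i' hi) j,
    typical_col_eq hT j j' (marg_congr j j' hj) i']

lemma margin_bound {k n : ℕ} {w v x : ℝ} (hν : (0:ℝ) < n) (hx : 0 ≤ x)
    (hw0 : 0 < w) (hw1 : w < 1) (heq : (k:ℝ)*w + (n:ℝ)*v = (⌊x*(n:ℝ)⌋₊:ℝ)) :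
    |v - x| ≤ (1 + k)/n := by
  have hF1 : (⌊x*(n:ℝ)⌋₊:ℝ) ≤ x*n := Nat.floor_le (by positivity)
  have hF2 : x*(n:ℝ) - 1 < (⌊x*(n:ℝ)⌋₊:ℝ) := Nat.sub_one_lt_floor _
  have hk0 : (0:ℝ) ≤ k := Nat.cast_nonneg k
  have h1 : (n:ℝ)*v ≤ x*n := by nlinarith
  have h2 : x*(n:ℝ) - (1 + k) ≤ n*v := by nlinarith
  have h3 : v - x ≤ 0 := by nlinarith
  have h4 : x - v ≤ (1+k)/n := by rw [le_div_iff₀ hν]; nlinarith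
  have h5 : (0:ℝ) ≤ (1+k)/n := by positivity
  rw [abs_le]
  constructor <;> linarith

/-- Lemma 2.4: `z₁₁ = B²(1-C)/(B²-2B+1/C) + O(n^(δ-1))` and
`z_{1,n+1} = z_{n+1,1} = BC + O(n^(δ-1))`. -/
theorem typical_table_entry_asymptotics
    (δ B C : ℝ) (hδ0 : 0 ≤ δ) (hδ1 : δ < 1) (hC0 : 0 < C) (hC1 : C < 3 / 4)
    (hB0 : 0 < B) (hB1 : B < 1 / (Real.sqrt (C / 3 - C ^ 2 / 3) + C))
    (Z : ∀ n : ℕ, Fin (⌊(n : ℝ) ^ δ⌋₊ + n) → Fin (⌊(n : ℝ) ^ δ⌋₊ + n) → ℝ)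
    (n₀ : ℕ) (hZ : ∀ n : ℕ, n₀ ≤ n → IsTypicalTable (marg n δ B C) (marg n δ B C) (Z n)) :
    ∃ K > (0 : ℝ), ∃ n₁ : ℕ, ∀ n : ℕ, n₁ ≤ n →
      |entR (Z n) 0 0 - B ^ 2 * (1 - C) / (B ^ 2 - 2 * B + 1 / C)| ≤ K * (n : ℝ) ^ (δ - 1) ∧
      entR (Z n) 0 ⌊(n : ℝ) ^ δ⌋₊ = entR (Z n) ⌊(n : ℝ) ^ δ⌋₊ 0 ∧
      |entR (Z n) 0 ⌊(n : ℝ) ^ δ⌋₊ - B * C| ≤ K * (n : ℝ) ^ (δ - 1) ∧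
      |entR (Z n) ⌊(n : ℝ) ^ δ⌋₊ 0 - B * C| ≤ K * (n : ℝ) ^ (δ - 1) := by
  have hC1' : C < 1 := by linarith
  have hsq : 0 ≤ Real.sqrt (C / 3 - C ^ 2 / 3) := Real.sqrt_nonneg _
  have hBC1 : B * C < 1 := by
    have hBC' : B < 1 / C := by
      refine lt_of_lt_of_le hB1 ?_
      apply one_div_le_one_div_of_le hC0
      linarith
    calc B * C < (1/C) * C := mul_lt_mul_of_pos_right hBC' hC0
      _ = 1 := by field_simp
  have hBC0 : 0 < B * C := mul_pos hB0 hC0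
  obtain ⟨hmem, hstat'⟩ := target_props hB0 hC0 hC1' hBC1
  set a' : ℝ := B^2*(1-C)/(B^2-2*B+1/C) with ha'
  set m : ℝ := min (B*C) C / 2 with hm
  set M : ℝ := (1 + max (B*C) C) / 2 with hM
  have hmin0 : 0 < min (B*C) C := lt_min hBC0 hC0
  have hmax1 : max (B*C) C < 1 := max_lt hBC1 hC1'
  have hm0 : 0 < m := by simp only [hm]; linarith
  have hM1 : M < 1 := by simp only [hM]; linarith
  have h1M : 0 < 1 - M := by linarith
  have hBCmem : B*C ∈ Set.Icc m M := by
    constructor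
    · simp only [hm]; linarith [min_le_left (B*C) C]
    · simp only [hM]; linarith [le_max_left (B*C) C]
  have hCmem : C ∈ Set.Icc m M := by
    constructor
    · simp only [hm]; linarith [min_le_right (B*C) C]
    · simp only [hM]; linarith [le_max_right (B*C) C]
  set ε₀ : ℝ := min (min (B*C) C / 2) ((1 - max (B*C) C)/2) with hε₀
  have hε₀0 : 0 < ε₀ := lt_min (by linarith) (by linarith)
  have hclose : ∀ x t : ℝ, min (B*C) C ≤ t → t ≤ max (B*C) C → |x - t| ≤ ε₀ →
      x ∈ Set.Icc m M := by
    intro x t h1 h2 h3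
    have h4 := abs_le.1 h3
    have e1 : ε₀ ≤ min (B*C) C / 2 := min_le_left _ _
    have e2 : ε₀ ≤ (1 - max (B*C) C)/2 := min_le_right _ _
    constructor
    · simp only [hm]; linarith [h4.1]
    · simp only [hM]; linarith [h4.2]
  set L : ℝ := 1/(m*(1-M)) with hL
  have hL0 : 0 < L := one_div_pos.2 (mul_pos hm0 h1M)
  set K : ℝ := max 2 (L * 6 / 4) with hK
  have hK0 : (0:ℝ) < K := lt_of_lt_of_le two_pos (le_max_left _ _)
  have hK2 : (2:ℝ) ≤ K := le_max_left _ _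
  have hKL : L * 6 / 4 ≤ K := le_max_right _ _
  have htend : Tendsto (fun nn : ℕ => (nn:ℝ)^(δ-1)) atTop (nhds 0) := by
    have h1 : Tendsto (fun x : ℝ => x^(δ-1)) atTop (nhds 0) := by
      have h2 := tendsto_rpow_neg_atTop (by linarith : (0:ℝ) < 1-δ)
      have h3 : δ - 1 = -(1-δ) := by ring
      rw [h3]
      exact h2
    exact h1.comp tendsto_natCast_atTop_atTop
  have hev : ∀ᶠ nn : ℕ in atTop, 2*(nn:ℝ)^(δ-1) ≤ ε₀ := by
    have h2 : Tendsto (fun nn : ℕ => 2*(nn:ℝ)^(δ-1)) atTop (nhds 0) := by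
      simpa using htend.const_mul 2
    exact h2.eventually (eventually_le_nhds hε₀0)
  obtain ⟨n₂, hn₂⟩ := eventually_atTop.1 hev
  refine ⟨K, hK0, max (max n₀ n₂) 1, fun n hn => ?_⟩
  have hn0 : n₀ ≤ n := le_trans (le_trans (le_max_left _ _) (le_max_left _ _)) hn
  have hn1 : 1 ≤ n := le_trans (le_max_right _ _) hn
  have hn2' : n₂ ≤ n := le_trans (le_trans (le_max_right _ _) (le_max_left _ _)) hn
  have hT := hZ n hn0
  set k := ⌊(n:ℝ)^δ⌋₊ with hk
  have hν : (0:ℝ) < n := by exact_mod_cast hn1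
  have hη0 : (0:ℝ) ≤ (n:ℝ)^(δ-1) := Real.rpow_nonneg hν.le _
  have hrp1 : (1:ℝ) ≤ (n:ℝ)^δ := by
    rw [← Real.rpow_zero (n:ℝ)]
    exact Real.rpow_le_rpow_of_exponent_le (by exact_mod_cast hn1) hδ0
  have hk1 : 1 ≤ k := Nat.le_floor (by exact_mod_cast hrp1)
  have hkn : k ≤ n := by
    have h1 : (n:ℝ)^δ ≤ ((n:ℕ):ℝ) := by
      calc (n:ℝ)^δ ≤ (n:ℝ)^(1:ℝ) :=
            Real.rpow_le_rpow_of_exponent_le (by exact_mod_cast hn1) hδ1.le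
        _ = ((n:ℕ):ℝ) := Real.rpow_one _
    calc k ≤ ⌊((n:ℕ):ℝ)⌋₊ := Nat.floor_mono h1
      _ = n := Nat.floor_natCast n
  have hkN : k < k + n := Nat.lt_add_of_pos_right hn1
  have h0N : 0 < k + n := lt_of_lt_of_le hn1 (Nat.le_add_left n k)
  set i0 : Fin (k+n) := ⟨0, h0N⟩ with hi0def
  set ik : Fin (k+n) := ⟨k, hkN⟩ with hikdef
  have hi0 : i0.1 < k := hk1
  have hik : ¬ ik.1 < k := lt_irrefl k
  set a : ℝ := Z n i0 i0 with hadef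
  set b : ℝ := Z n i0 ik with hbdef
  set c : ℝ := Z n ik ik with hcdef
  have hblock : ∀ i j : Fin (k+n), Z n i j =
      if i.1 < k then (if j.1 < k then a else b) else (if j.1 < k then b else c) := by
    intro i j
    by_cases hi : i.1 < k <;> by_cases hj : j.1 < k <;>
      simp only [hi, hj, if_true, if_false]
    · exact block_const hT i j i0 i0 (iff_of_true hi hi0) (iff_of_true hj hi0)
    · exact block_const hT i j i0 ik (iff_of_true hi hi0) (iff_of_false hj hik)
    · rw [block_const hT i j ik i0 (iff_of_false hi hik) (iff_of_true hj hi0)]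
      exact typical_symm hT ik i0
    · exact block_const hT i j ik ik (iff_of_false hi hik) (iff_of_false hj hik)
  have hmarg0 : marg n δ B C i0 = ⌊B*C*(n:ℝ)⌋₊ := by
    simp only [marg, ← hk]
    rw [if_pos hi0]
  have hmargk : marg n δ B C ik = ⌊C*(n:ℝ)⌋₊ := by
    simp only [marg, ← hk]
    rw [if_neg hik]
  have hsum1 : (k:ℝ)*a + (n:ℝ)*b = (⌊B*C*(n:ℝ)⌋₊:ℝ) := by
    have h1 : ∑ j : Fin (k+n), Z n i0 j = ((marg n δ B C i0 : ℕ) : ℝ) := hT.2.1.2.1 i0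
    rw [block_sum (fun j => Z n i0 j) a b
      (fun j hj => by show Z n i0 j = a; rw [hblock]; simp [hi0, show (j:ℕ) < k from hj])
      (fun j hj => by show Z n i0 j = b; rw [hblock]; simp [hi0, show ¬ (j:ℕ) < k from hj]), hmarg0] at h1
    exact h1
  have hsum2 : (k:ℝ)*b + (n:ℝ)*c = (⌊C*(n:ℝ)⌋₊:ℝ) := by
    have h1 : ∑ j : Fin (k+n), Z n ik j = ((marg n δ B C ik : ℕ) : ℝ) := hT.2.1.2.1 ik
    rw [block_sum (fun j => Z n ik j) b c
      (fun j hj => by show Z n ik j = b; rw [hblock]; simp [hik, show (j:ℕ) < k from hj])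
      (fun j hj => by show Z n ik j = c; rw [hblock]; simp [hik, show ¬ (j:ℕ) < k from hj]), hmargk] at h1
    exact h1
  have hbB : |b - B*C| ≤ (1 + k)/n :=
    margin_bound hν (by positivity) (hT.1 i0 i0).1 (hT.1 i0 i0).2 hsum1
  have hcC : |c - C| ≤ (1 + k)/n :=
    margin_bound hν hC0.le (hT.1 i0 ik).1 (hT.1 i0 ik).2 hsum2
  have hkd : ((1:ℝ) + k)/n ≤ 2*(n:ℝ)^(δ-1) := by
    have h1 : (k:ℝ) ≤ (n:ℝ)^δ := by
      rw [hk]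
      exact_mod_cast Nat.floor_le (by positivity : (0:ℝ) ≤ (n:ℝ)^δ)
    have h2 : (n:ℝ)^(δ-1) = (n:ℝ)^δ / n := by
      rw [Real.rpow_sub hν, Real.rpow_one]
    rw [h2, ← mul_div_assoc]
    gcongr
    linarith
  have hbB2 : |b - B*C| ≤ 2*(n:ℝ)^(δ-1) := le_trans hbB hkd
  have hcC2 : |c - C| ≤ 2*(n:ℝ)^(δ-1) := le_trans hcC hkd
  have hεn : 2*(n:ℝ)^(δ-1) ≤ ε₀ := hn₂ n hn2'
  have hbmem : b ∈ Set.Icc m M :=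
    hclose b (B*C) (min_le_left _ _) (le_max_left _ _) (le_trans hbB2 hεn)
  have hcmem : c ∈ Set.Icc m M :=
    hclose c C (min_le_right _ _) (le_max_right _ _) (le_trans hcC2 hεn)
  have hstat : uu a + uu c = 2 * uu b := stationarity hk1 hn1 hkn hT a b c hblock
  have hA : |a - a'| ≤ L * (2*|b - B*C| + |c - C|)/4 :=
    key_est hm0 hM1 ⟨(hT.1 i0 i0).1, (hT.1 i0 i0).2⟩ hmem hbmem hcmem hBCmem hCmem
      hstat hstat'
  have hA2 : |a - a'| ≤ K * (n:ℝ)^(δ-1) := by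
    have h1 : L * (2*|b - B*C| + |c - C|)/4 ≤ L * 6 / 4 * (n:ℝ)^(δ-1) := by
      have h2 : 2*|b - B*C| + |c - C| ≤ 6*(n:ℝ)^(δ-1) := by linarith
      calc L * (2*|b - B*C| + |c - C|)/4 ≤ L * (6*(n:ℝ)^(δ-1))/4 := by
            apply div_le_div_of_nonneg_right ?_ (by norm_num)
            exact mul_le_mul_of_nonneg_left h2 hL0.le
        _ = L * 6 / 4 * (n:ℝ)^(δ-1) := by ring
    calc |a - a'| ≤ L * 6 / 4 * (n:ℝ)^(δ-1) := le_trans hA h1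
      _ ≤ K * (n:ℝ)^(δ-1) := mul_le_mul_of_nonneg_right hKL hη0
  have hsym : b = Z n ik i0 := typical_symm hT i0 ik
  have e00 : entR (Z n) 0 0 = a := by
    rw [entR, dif_pos (⟨h0N, h0N⟩ : 0 < k + n ∧ 0 < k + n)]
  have e0k : entR (Z n) 0 k = b := by
    rw [entR, dif_pos (⟨h0N, hkN⟩ : 0 < k + n ∧ k < k + n)]
  have ek0 : entR (Z n) k 0 = Z n ik i0 := by
    rw [entR, dif_pos (⟨hkN, h0N⟩ : k < k + n ∧ 0 < k + n)]
  refine ⟨?_, ?_, ?_, ?_⟩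
  · rw [e00]; exact hA2
  · rw [e0k, ek0, hsym]
  · rw [e0k]
    calc |b - B*C| ≤ 2*(n:ℝ)^(δ-1) := hbB2
      _ ≤ K * (n:ℝ)^(δ-1) := mul_le_mul_of_nonneg_right hK2 hη0
  · rw [ek0, ← hsym]
    calc |b - B*C| ≤ 2*(n:ℝ)^(δ-1) := hbB2
      _ ≤ K * (n:ℝ)^(δ-1) := mul_le_mul_of_nonneg_right hK2 hη0
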